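/- Let i, i' ∈ R(u,v) be two reduced words related by a 2- or 3-move. Then the permutation σ_{i',i} of [1,m] sends i-bounded indices to i'-bounded indices. Moreover, if the move relating i and i' is non-trivial, then its position k is i-bounded and σ_{i',i}(k) = k. -/

import Mathlib

/-!
An index `l` is bounded exactly when its letter `|i_l|` already occurs before `l`, and a move
only rearranges two or three consecutive entries, with `σ` following the letters. The swap
`(k - 1, k)` keeps the order of every pair of positions except `(k - 1, k)` itself, and for a
trivial 2-move these two positions carry different letters: equal letters of equal sign would
give a factor `s s` in a reduced word, and equal letters of opposite sign make the move
non-trivial. After a 3-move `x y x ↦ y x y`, every later position still sees both `x` and `y`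
before it. For a non-trivial move, `k` is bounded by `k - 1` (2-move) or by `k - 2` (3-move).
-/

open scoped Classical

namespace SLC

variable {V : Type*} [DecidableEq V]

/-- The simply-laced Coxeter matrix associated with a simple graph `P`:
`M i i = 1`, `M i j = 3` if `i` and `j` are adjacent, and `M i j = 2` otherwise. -/
noncomputable def coxeterMatrix (P : SimpleGraph V) : CoxeterMatrix V where
  M := fun i j => if i = j then 1 else if P.Adj i j then 3 else 2
  isSymm := by
    ext i j
    show (if j = i then (1 : ℕ) else if P.Adj j i then 3 else 2) =
      (if i = j then 1 else if P.Adj i j then 3 else 2)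
    by_cases h : i = j
    · subst h; rfl
    · rw [if_neg (Ne.symm h), if_neg h]
      by_cases ha : P.Adj i j
      · rw [if_pos (P.adj_symm ha), if_pos ha]
      · rw [if_neg (fun hc => ha (P.adj_symm hc)), if_neg ha]
  diagonal := by intro i; simp
  off_diagonal := by
    intro i i' h
    show (if i = i' then (1 : ℕ) else if P.Adj i i' then 3 else 2) ≠ 1
    rw [if_neg h]
    split <;> omega

/-- `e` is a reduced word for the pair `(u, v)`: the subword of entries with negative sign
(first component `false`), with signs forgotten, is a reduced word for `u`, and the subword of
entries with positive sign is a reduced word for `v`. -/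
def IsRWordPair {W : Type*} [Group W] (P : SimpleGraph V)
    (cs : CoxeterSystem (coxeterMatrix P) W) (u v : W) {m : ℕ}
    (e : Fin m → Bool × V) : Prop :=
  cs.wordProd (((List.ofFn e).filter fun p => !p.1).map Prod.snd) = u ∧
    (((List.ofFn e).filter fun p => !p.1).map Prod.snd).length = cs.length u ∧
    cs.wordProd (((List.ofFn e).filter fun p => p.1).map Prod.snd) = v ∧
    (((List.ofFn e).filter fun p => p.1).map Prod.snd).length = cs.length v

/-- `k = l⁻`: `k` is the largest index smaller than `l` carrying the same letter of `P`. -/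
def IsPred {m : ℕ} (e : Fin m → Bool × V) (k l : Fin m) : Prop :=
  k < l ∧ (e k).2 = (e l).2 ∧ ∀ j, k < j → j < l → (e j).2 ≠ (e l).2

/-- The index `l` is `e`-bounded: `l⁻ > 0`, i.e. `l` has a predecessor. -/
def BoundedIdx {m : ℕ} (e : Fin m → Bool × V) (l : Fin m) : Prop :=
  ∃ k, IsPred e k l

/-- Conditions (ii) and (iii) of Definition 3.1 (inclined edges), for `k < l`. -/
def InclCond {m : ℕ} (P : SimpleGraph V) (e : Fin m → Bool × V) (k l : Fin m) : Prop :=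
  k < l ∧ P.Adj (e k).2 (e l).2 ∧
    ((∃ p, IsPred e p l ∧ p < k ∧ (∀ q, IsPred e q k → q < p) ∧ (e p).1 = (e k).1) ∨
     (∃ q, IsPred e q k ∧ (∀ p, IsPred e p l → p < q) ∧ (e q).1 = !(e k).1))

/-- `a → b` is a directed edge of the graph `Σ(e)`. -/
def DirEdge {m : ℕ} (P : SimpleGraph V) (e : Fin m → Bool × V) (a b : Fin m) : Prop :=
  (IsPred e a b ∧ (e a).1 = true) ∨ (IsPred e b a ∧ (e b).1 = false) ∨
    (InclCond P e a b ∧ (e a).1 = false) ∨ (InclCond P e b a ∧ (e b).1 = true)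

/-- `{a, b}` is an edge of the graph `Σ(e)` (in some direction). -/
def UEdge {m : ℕ} (P : SimpleGraph V) (e : Fin m → Bool × V) (a b : Fin m) : Prop :=
  DirEdge P e a b ∨ DirEdge P e b a

/-- Adjacency in the doubled graph `P̃`. -/
def TAdj (P : SimpleGraph V) (p q : Bool × V) : Prop :=
  p.1 = q.1 ∧ P.Adj p.2 q.2

/-- The negative of a letter of `P̃`. -/
def negEnt (p : Bool × V) : Bool × V := (!p.1, p.2)

/-- The combinatorial data of a 2- or 3-move: the (consecutive) positions involved. -/
inductive MoveSpec (m : ℕ) where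
  | two (a b : Fin m)
  | three (a b c : Fin m)

/-- The position of a move (the last of the positions involved). -/
def MoveSpec.pos {m : ℕ} : MoveSpec m → Fin m
  | .two _ b => b
  | .three _ _ c => c

/-- `e'` is obtained from `e` by the 2- or 3-move described by `s`. -/
def IsMove {m : ℕ} (P : SimpleGraph V) (e e' : Fin m → Bool × V) : MoveSpec m → Prop
  | .two a b => (b : ℕ) = (a : ℕ) + 1 ∧ ¬ TAdj P (e a) (e b) ∧
      e' a = e b ∧ e' b = e a ∧ ∀ l, l ≠ a → l ≠ b → e' l = e l
  | .three a b c => (b : ℕ) = (a : ℕ) + 1 ∧ (c : ℕ) = (b : ℕ) + 1 ∧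
      e c = e a ∧ TAdj P (e b) (e c) ∧
      e' a = e b ∧ e' b = e a ∧ e' c = e b ∧ ∀ l, l ≠ a → l ≠ b → l ≠ c → e' l = e l

/-- A move is trivial if it is a 2-move interchanging entries which are not opposite. -/
def MoveTrivial {m : ℕ} (e : Fin m → Bool × V) : MoveSpec m → Prop
  | .two a b => e b ≠ negEnt (e a)
  | .three _ _ _ => False

/-- The permutation `σ` associated with a move. -/
noncomputable def moveSigma {m : ℕ} (e : Fin m → Bool × V) : MoveSpec m → Equiv.Perm (Fin m)
  | .two a b => if e b = negEnt (e a) then 1 else Equiv.swap a b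
  | .three a b _ => Equiv.swap a b

/-- The skew-symmetric form `Ω` of the graph `Σ(e)`, over a commutative ring `R`. -/
noncomputable def omegaForm (R : Type*) [CommRing R] {m : ℕ} (P : SimpleGraph V)
    (e : Fin m → Bool × V) (x y : Fin m → R) : R :=
  ∑ a : Fin m, ∑ b : Fin m, if DirEdge P e a b then x a * y b - x b * y a else 0

/-- The symplectic transvection `τ_k` of the graph `Σ(e)`, over `R`. -/
noncomputable def transv (R : Type*) [CommRing R] {m : ℕ} (P : SimpleGraph V)
    (e : Fin m → Bool × V) (k : Fin m) (x : Fin m → R) : Fin m → R :=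
  x - omegaForm R P e x (Pi.single k 1) • (Pi.single k 1 : Fin m → R)

/-- The group `Γ_e ⊆ GL_m(ℤ)` generated by the transvections `τ_k`, `k ∈ B(e)`. -/
noncomputable def Gamma {m : ℕ} (P : SimpleGraph V) (e : Fin m → Bool × V) :
    Subgroup ((Fin m → ℤ) ≃ₗ[ℤ] (Fin m → ℤ)) :=
  Subgroup.closure {g | ∃ k, BoundedIdx e k ∧ ⇑g = transv ℤ P e k}

/-- The group `Γ_e(F₂)` of linear transformations of `F₂^m` generated by the reductions
modulo 2 of the transvections `τ_k`, `k ∈ B(e)`. -/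
noncomputable def GammaF2 {m : ℕ} (P : SimpleGraph V) (e : Fin m → Bool × V) :
    Subgroup (Equiv.Perm (Fin m → ZMod 2)) :=
  Subgroup.closure {g | ∃ k, BoundedIdx e k ∧ ⇑g = transv (ZMod 2) P e k}

/-- The map `φ⁺` associated with a move. -/
noncomputable def phiP {m : ℕ} (P : SimpleGraph V) (e : Fin m → Bool × V) (s : MoveSpec m)
    (x : Fin m → ℤ) : Fin m → ℤ := fun l =>
  if l = s.pos ∧ ¬ MoveTrivial e s then
    (∑ a : Fin m, if DirEdge P e a s.pos then x a else 0) - x s.pos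
  else x (moveSigma e s l)

/-- The map `φ⁻` associated with a move. -/
noncomputable def phiM {m : ℕ} (P : SimpleGraph V) (e : Fin m → Bool × V) (s : MoveSpec m)
    (x : Fin m → ℤ) : Fin m → ℤ := fun l =>
  if l = s.pos ∧ ¬ MoveTrivial e s then
    (∑ b : Fin m, if DirEdge P e s.pos b then x b else 0) - x s.pos
  else x (moveSigma e s l)

theorem _root_.CoxeterSystem.IsReduced.infix {B W : Type*} [Group W] {M : CoxeterMatrix B}
    {cs : CoxeterSystem M W} {ω ω' : List B} (hω : cs.IsReduced ω) (h : ω' <:+: ω) :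
    cs.IsReduced ω' := by
  obtain ⟨s, t, rfl⟩ := h
  simpa using (hω.drop s.length).take ω'.length

theorem _root_.CoxeterSystem.not_isReduced_pair_self {B W : Type*} [Group W]
    {M : CoxeterMatrix B} (cs : CoxeterSystem M W) (i : B) : ¬ cs.IsReduced [i, i] := by
  simp [CoxeterSystem.IsReduced, CoxeterSystem.wordProd_cons]

theorem _root_.List.pair_infix_ofFn {α : Type*} {m : ℕ} (f : Fin m → α) {a b : Fin m}
    (hab : (b : ℕ) = a + 1) : [f a, f b] <:+: List.ofFn f := by
  refine List.infix_iff_getElem?.2 ⟨a, by simp; omega, fun i hi => ?_⟩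
  match i, hi with
  | 0, _ => simp
  | 1, _ => simp [Nat.add_comm 1, ← hab]

theorem IsRWordPair.snd_ne_of_fst_eq {W : Type*} [Group W] {P : SimpleGraph V}
    {cs : CoxeterSystem (coxeterMatrix P) W} {u v : W} {m : ℕ} {e : Fin m → Bool × V}
    (he : IsRWordPair P cs u v e) {a b : Fin m} (hab : (b : ℕ) = a + 1)
    (hsign : (e a).1 = (e b).1) : (e a).2 ≠ (e b).2 := by
  intro hletter
  have hsubword : ∀ (f : Bool × V → Bool) (w : W), f (e a) → f (e b) →
      cs.wordProd (((List.ofFn e).filter f).map Prod.snd) = w →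
      (((List.ofFn e).filter f).map Prod.snd).length = cs.length w → False := by
    intro f w ha hb hprod hlen
    have hred : cs.IsReduced (((List.ofFn e).filter f).map Prod.snd) := by
      rw [CoxeterSystem.IsReduced, hprod, hlen]
    refine cs.not_isReduced_pair_self (e a).2 (hred.infix ?_)
    simpa [ha, hb, hletter] using ((List.pair_infix_ofFn e hab).filter f).map Prod.snd
  obtain ⟨hu, hlu, hv, hlv⟩ := he
  cases hs : (e a).1
  · exact hsubword _ u (by simp [hs]) (by simp [← hsign, hs]) hu hlu
  · exact hsubword _ v (by simp [hs]) (by simp [← hsign, hs]) hv hlv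

theorem IsRWordPair.snd_ne_of_ne_negEnt {W : Type*} [Group W] {P : SimpleGraph V}
    {cs : CoxeterSystem (coxeterMatrix P) W} {u v : W} {m : ℕ} {e : Fin m → Bool × V}
    (he : IsRWordPair P cs u v e) {a b : Fin m} (hab : (b : ℕ) = a + 1)
    (hopp : e b ≠ negEnt (e a)) : (e a).2 ≠ (e b).2 := by
  intro hletter
  by_cases hsign : (e a).1 = (e b).1
  · exact he.snd_ne_of_fst_eq hab hsign hletter
  · exact hopp (Prod.ext (Bool.eq_not.2 (Ne.symm hsign)) hletter.symm)

theorem boundedIdx_iff {m : ℕ} {e : Fin m → Bool × V} {l : Fin m} :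
    BoundedIdx e l ↔ ∃ k < l, (e k).2 = (e l).2 := by
  refine ⟨fun ⟨k, hkl, hk, _⟩ => ⟨k, hkl, hk⟩, fun ⟨k₀, hk₀⟩ => ?_⟩
  obtain ⟨k, hk, hmax⟩ :=
    (Finset.univ.filter fun k => k < l ∧ (e k).2 = (e l).2).exists_max_image id
      ⟨k₀, by simpa using hk₀⟩
  simp only [Finset.mem_filter, Finset.mem_univ, true_and, id] at hk hmax
  exact ⟨k, hk.1, hk.2, fun j hkj hjl hj => (hmax j ⟨hjl, hj⟩).not_gt hkj⟩

theorem _root_.Fin.swap_apply_lt_swap_apply {m : ℕ} {a b k l : Fin m} (hab : (b : ℕ) = a + 1)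
    (hkl : k < l) (hpair : ¬(k = a ∧ l = b)) : Equiv.swap a b k < Equiv.swap a b l := by
  rw [Fin.lt_def] at hkl
  simp only [Fin.ext_iff] at hpair
  simp only [Equiv.swap_apply_def]
  split_ifs <;> simp only [Fin.lt_def, Fin.ext_iff] at * <;> omega

theorem boundedIdx_comp_swap {m : ℕ} {e : Fin m → Bool × V} {a b : Fin m}
    (hab : (b : ℕ) = a + 1) (hne : (e a).2 ≠ (e b).2) {l : Fin m} (hl : BoundedIdx e l) :
    BoundedIdx (e ∘ Equiv.swap a b) (Equiv.swap a b l) := by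
  obtain ⟨k, hkl, hk⟩ := boundedIdx_iff.1 hl
  refine boundedIdx_iff.2 ⟨Equiv.swap a b k, ?_, by simpa using hk⟩
  exact Fin.swap_apply_lt_swap_apply hab hkl (by rintro ⟨rfl, rfl⟩; exact hne hk)

theorem boundedIdx_comp_swap_iff {m : ℕ} {e : Fin m → Bool × V} {a b : Fin m}
    (hab : (e a).2 = (e b).2) (l : Fin m) :
    BoundedIdx (e ∘ Equiv.swap a b) l ↔ BoundedIdx e l := by
  have hletter : ∀ x, ((e ∘ Equiv.swap a b) x).2 = (e x).2 := by
    intro x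
    simp only [Function.comp_apply, Equiv.swap_apply_def]
    split_ifs <;> simp_all
  simp only [boundedIdx_iff, hletter]

theorem IsMove.boundedIdx_three {P : SimpleGraph V} {m : ℕ} {e e' : Fin m → Bool × V}
    {a b c : Fin m} (hmv : IsMove P e e' (.three a b c)) {l : Fin m} (hl : BoundedIdx e l) :
    BoundedIdx e' (Equiv.swap a b l) := by
  obtain ⟨hab, hbc, hca, hadj, hea, heb, hec, hrest⟩ := hmv
  have hac : a < c := by rw [Fin.lt_def]; omega
  have hbc' : b < c := by rw [Fin.lt_def]; omega
  have hswap_c : Equiv.swap a b c = c := Equiv.swap_apply_of_ne_of_ne hac.ne' hbc'.ne'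
  have hne : (e b).2 ≠ (e a).2 := by simpa [hca] using hadj.2.ne
  have hletter : ∀ x ≠ c, (e' (Equiv.swap a b x)).2 = (e x).2 := by
    intro x hxc
    rcases eq_or_ne x a with rfl | hxa
    · simp [heb]
    rcases eq_or_ne x b with rfl | hxb
    · simp [hea]
    · rw [Equiv.swap_apply_of_ne_of_ne hxa hxb, hrest x hxa hxb hxc]
  obtain ⟨k, hkl, hk⟩ := boundedIdx_iff.1 hl
  rw [boundedIdx_iff]
  rcases eq_or_ne l c with rfl | hlc
  · rw [hswap_c]
    exact ⟨a, hac, by rw [hea, hec]⟩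
  rw [← hletter l hlc] at hk
  rcases eq_or_ne k c with rfl | hkc
  · refine ⟨b, ?_, by rw [← hk, heb, hca]⟩
    rw [Equiv.swap_apply_of_ne_of_ne (hac.trans hkl).ne' (hbc'.trans hkl).ne']
    exact hbc'.trans hkl
  · refine ⟨Equiv.swap a b k, Fin.swap_apply_lt_swap_apply hab hkl ?_,
      by rw [← hk, hletter k hkc]⟩
    rintro ⟨rfl, rfl⟩
    exact hne (by simpa [hea] using hk.symm)

theorem IsMove.boundedIdx_pos_three {P : SimpleGraph V} {m : ℕ} {e e' : Fin m → Bool × V}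
    {a b c : Fin m} (hmv : IsMove P e e' (.three a b c)) :
    BoundedIdx e c ∧ Equiv.swap a b c = c := by
  obtain ⟨hab, hbc, hca, -⟩ := hmv
  have hac : a < c := by rw [Fin.lt_def]; omega
  refine ⟨boundedIdx_iff.2 ⟨a, hac, by rw [hca]⟩, ?_⟩
  exact Equiv.swap_apply_of_ne_of_ne hac.ne' (by rw [Ne, Fin.ext_iff]; omega)

theorem IsMove.eq_comp_swap {V : Type*} {P : SimpleGraph V} {m : ℕ}
    {e e' : Fin m → Bool × V} {a b : Fin m} (hmv : IsMove P e e' (.two a b)) :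
    e' = e ∘ Equiv.swap a b := by
  obtain ⟨-, -, hea, heb, hrest⟩ := hmv
  funext x
  rcases eq_or_ne x a with rfl | hxa
  · simp [hea]
  rcases eq_or_ne x b with rfl | hxb
  · simp [heb]
  · simp [Equiv.swap_apply_of_ne_of_ne hxa hxb, hrest x hxa hxb]

variable {V : Type*} [DecidableEq V] [Fintype V] {W : Type*} [Group W]

theorem sigma_bounded_general (P : SimpleGraph V) (cs : CoxeterSystem (coxeterMatrix P) W)
    (u v : W) {m : ℕ}
    (e e' : Fin m → Bool × V) (he : IsRWordPair P cs u v e)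
    (s : MoveSpec m) (hmv : IsMove P e e' s) :
    (∀ l, BoundedIdx e l → BoundedIdx e' (moveSigma e s l)) ∧
      (¬ MoveTrivial e s → BoundedIdx e s.pos ∧ moveSigma e s s.pos = s.pos) := by
  cases s with
  | two a b =>
    have hab : (b : ℕ) = a + 1 := hmv.1
    rw [hmv.eq_comp_swap]
    by_cases hopp : e b = negEnt (e a)
    · have hletter : (e a).2 = (e b).2 := (congrArg Prod.snd hopp).symm
      have hσ : moveSigma e (.two a b) = 1 := if_pos hopp
      refine ⟨fun l hl => ?_,
        fun _ => ⟨boundedIdx_iff.2 ⟨a, ?_, hletter⟩, by simp [hσ, MoveSpec.pos]⟩⟩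
      · simpa [hσ, boundedIdx_comp_swap_iff hletter] using hl
      · rw [MoveSpec.pos, Fin.lt_def]; omega
    · have hσ : moveSigma e (.two a b) = Equiv.swap a b := if_neg hopp
      exact ⟨fun l hl => hσ ▸ boundedIdx_comp_swap hab (he.snd_ne_of_ne_negEnt hab hopp) hl,
        fun htriv => absurd hopp htriv⟩
  | three a b c =>
    exact ⟨fun l hl => hmv.boundedIdx_three hl, fun _ => hmv.boundedIdx_pos_three⟩

/-- Proposition 3.4: the permutation `σ_{i',i}` sends `i`-bounded indices to `i'`-bounded
ones; if the move is non-trivial then its position `k` is `i`-bounded and `σ(k) = k`. -/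
theorem sigma_bounded (P : SimpleGraph V) (cs : CoxeterSystem (coxeterMatrix P) W)
    (u v : W) {m : ℕ} (hm : m = cs.length u + cs.length v)
    (e e' : Fin m → Bool × V) (he : IsRWordPair P cs u v e) (he' : IsRWordPair P cs u v e')
    (s : MoveSpec m) (hmv : IsMove P e e' s) :
    (∀ l, BoundedIdx e l → BoundedIdx e' (moveSigma e s l)) ∧
      (¬ MoveTrivial e s → BoundedIdx e s.pos ∧ moveSigma e s s.pos = s.pos) :=
  sigma_bounded_general P cs u v e e' he s hmv

end SLC
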